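/- Let f : ℝ → ℝ be continuously differentiable with f′(t) ≠ 0 for all t ∈ ℝ, let h > 0, and let n_g, n_d ≥ 1 be natural numbers. Define F₁(θ, ψ) = (θ − h f′(θψ)ψ, ψ) and F₂(θ, ψ) = (θ, ψ + h f′(θψ)θ). Then the Jacobian matrix of the alternating gradient descent update operator F₂^{n_d} ∘ F₁^{n_g} at (0, 0) equals [[1, −n_g h f′(0)], [n_d h f′(0), 1 − n_g n_d h² f′(0)²]]. -/
import Mathlib


open Matrix Asymptotics

noncomputable def toCLM (A : Matrix (Fin 2) (Fin 2) ℝ) : (Fin 2 → ℝ) →L[ℝ] (Fin 2 → ℝ) :=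
  LinearMap.toContinuousLinearMap (Matrix.toLin' A)

lemma toCLM_comp (A B : Matrix (Fin 2) (Fin 2) ℝ) :
    (toCLM A).comp (toCLM B) = toCLM (A * B) := by
  ext x
  simp [toCLM, Matrix.toLin'_apply, Matrix.mulVec_mulVec]

lemma aux_little {f : ℝ → ℝ} (hf : ContDiff ℝ 1 f) (j : Fin 2) :
    HasFDerivAt (fun x : Fin 2 → ℝ => deriv f (x 0 * x 1) * x j)
      (deriv f 0 • (ContinuousLinearMap.proj j : (Fin 2 → ℝ) →L[ℝ] ℝ)) 0 := by
  rw [hasFDerivAt_iff_isLittleO_nhds_zero]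
  have h1 : (fun v : Fin 2 → ℝ => deriv f (v 0 * v 1) - deriv f 0)
      =o[nhds (0 : Fin 2 → ℝ)] (fun _ => (1 : ℝ)) := by
    rw [isLittleO_one_iff]
    have hc : Continuous fun v : Fin 2 → ℝ => deriv f (v 0 * v 1) - deriv f 0 :=
      ((hf.continuous_deriv le_rfl).comp ((continuous_apply 0).mul (continuous_apply 1))).sub
        continuous_const
    simpa using hc.tendsto 0
  have h2 : (fun v : Fin 2 → ℝ => v j) =O[nhds (0 : Fin 2 → ℝ)] (id : (Fin 2 → ℝ) → Fin 2 → ℝ) :=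
    isBigO_of_le _ (fun v => by simpa using norm_le_pi_norm v j)
  have h3 := h1.smul_isBigO h2
  simp only [smul_eq_mul, one_smul] at h3
  refine h3.congr (fun v => ?_) (fun v => rfl)
  simp only [zero_add, ContinuousLinearMap.smul_apply, ContinuousLinearMap.proj_apply,
    smul_eq_mul, Pi.zero_apply, mul_zero, zero_mul, sub_zero]
  ring

lemma toCLM_id : toCLM !![1, 0; 0, 1] = ContinuousLinearMap.id ℝ (Fin 2 → ℝ) := by
  ext v i
  fin_cases i <;>
    simp [toCLM, Matrix.toLin'_apply, Matrix.mulVec, dotProduct, Fin.sum_univ_two]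

lemma hasFDerivAt_F1 {f : ℝ → ℝ} (hf : ContDiff ℝ 1 f) {h : ℝ}
    {F₁ : (Fin 2 → ℝ) → (Fin 2 → ℝ)}
    (hF₁ : ∀ x : Fin 2 → ℝ, F₁ x = ![x 0 - h * deriv f (x 0 * x 1) * x 1, x 1]) :
    HasFDerivAt F₁ (toCLM !![1, -(h * deriv f 0); 0, 1]) 0 := by
  apply hasFDerivAt_pi'.2
  intro i
  simp only [hF₁]
  fin_cases i
  · have h1 : HasFDerivAt (fun x : Fin 2 → ℝ => x 0 - h * deriv f (x 0 * x 1) * x 1)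
        ((ContinuousLinearMap.proj 0 : (Fin 2 → ℝ) →L[ℝ] ℝ)
          - (h * deriv f 0) • ContinuousLinearMap.proj 1) 0 := by
      have h2 := ((aux_little hf 1).const_mul h)
      have h3 : HasFDerivAt (fun x : Fin 2 → ℝ => h * deriv f (x 0 * x 1) * x 1)
          ((h * deriv f 0) • (ContinuousLinearMap.proj 1 : (Fin 2 → ℝ) →L[ℝ] ℝ)) 0 := by
        simpa [mul_assoc, smul_smul] using h2
      exact (hasFDerivAt_apply 0 (0 : Fin 2 → ℝ)).sub h3
    refine h1.congr_fderiv ?_ |>.congr_of_eventuallyEq ?_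
    · ext v
      simp [toCLM, Matrix.toLin'_apply, Matrix.mulVec, dotProduct, Fin.sum_univ_two]
      ring
    · filter_upwards with v; simp
  · refine (hasFDerivAt_apply 1 (0 : Fin 2 → ℝ)).congr_fderiv ?_ |>.congr_of_eventuallyEq ?_
    · ext v
      simp [toCLM, Matrix.toLin'_apply, Matrix.mulVec, dotProduct, Fin.sum_univ_two]
    · filter_upwards with v; simp

lemma hasFDerivAt_F2 {f : ℝ → ℝ} (hf : ContDiff ℝ 1 f) {h : ℝ}
    {F₂ : (Fin 2 → ℝ) → (Fin 2 → ℝ)}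
    (hF₂ : ∀ x : Fin 2 → ℝ, F₂ x = ![x 0, x 1 + h * deriv f (x 0 * x 1) * x 0]) :
    HasFDerivAt F₂ (toCLM !![1, 0; h * deriv f 0, 1]) 0 := by
  apply hasFDerivAt_pi'.2
  intro i
  simp only [hF₂]
  fin_cases i
  · refine (hasFDerivAt_apply 0 (0 : Fin 2 → ℝ)).congr_fderiv ?_ |>.congr_of_eventuallyEq ?_
    · ext v
      simp [toCLM, Matrix.toLin'_apply, Matrix.mulVec, dotProduct, Fin.sum_univ_two]
    · filter_upwards with v; simp
  · have h1 : HasFDerivAt (fun x : Fin 2 → ℝ => x 1 + h * deriv f (x 0 * x 1) * x 0)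
        ((ContinuousLinearMap.proj 1 : (Fin 2 → ℝ) →L[ℝ] ℝ)
          + (h * deriv f 0) • ContinuousLinearMap.proj 0) 0 := by
      have h3 : HasFDerivAt (fun x : Fin 2 → ℝ => h * deriv f (x 0 * x 1) * x 0)
          ((h * deriv f 0) • (ContinuousLinearMap.proj 0 : (Fin 2 → ℝ) →L[ℝ] ℝ)) 0 := by
        simpa [mul_assoc, smul_smul] using ((aux_little hf 0).const_mul h)
      exact (hasFDerivAt_apply 1 (0 : Fin 2 → ℝ)).add h3
    refine h1.congr_fderiv ?_ |>.congr_of_eventuallyEq ?_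
    · ext v
      simp [toCLM, Matrix.toLin'_apply, Matrix.mulVec, dotProduct, Fin.sum_univ_two]
      ring
    · filter_upwards with v; simp

lemma toCLM_one : toCLM 1 = ContinuousLinearMap.id ℝ (Fin 2 → ℝ) := by
  ext v i
  simp [toCLM, Matrix.toLin'_apply]

lemma iterate_deriv {F : (Fin 2 → ℝ) → (Fin 2 → ℝ)} {A : Matrix (Fin 2) (Fin 2) ℝ}
    (h0 : F 0 = 0) (hF : HasFDerivAt F (toCLM A) 0) (n : ℕ) :
    F^[n] 0 = 0 ∧ HasFDerivAt (F^[n]) (toCLM (A ^ n)) 0 := by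
  induction n with
  | zero =>
    refine ⟨by simp, ?_⟩
    rw [Function.iterate_zero, pow_zero, toCLM_one]
    exact hasFDerivAt_id 0
  | succ n ih =>
    constructor
    · rw [Function.iterate_succ_apply', ih.1, h0]
    · rw [Function.iterate_succ']
      have hc : HasFDerivAt F (toCLM A) (F^[n] 0) := ih.1.symm ▸ hF
      refine (hc.comp 0 ih.2).congr_fderiv ?_
      rw [toCLM_comp, ← pow_succ']

lemma pow_upper (b : ℝ) (n : ℕ) :
    (!![1, b; 0, 1] : Matrix (Fin 2) (Fin 2) ℝ) ^ n = !![1, n * b; 0, 1] := by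
  induction n with
  | zero =>
    ext i j
    fin_cases i <;> fin_cases j <;> simp [Matrix.one_apply]
  | succ n ih =>
    ext i j
    fin_cases i <;> fin_cases j <;>
      simp [pow_succ, ih, Matrix.mul_apply, Fin.sum_univ_two] <;>
      (push_cast; ring)

lemma pow_lower (c : ℝ) (n : ℕ) :
    (!![1, 0; c, 1] : Matrix (Fin 2) (Fin 2) ℝ) ^ n = !![1, 0; n * c, 1] := by
  induction n with
  | zero =>
    ext i j
    fin_cases i <;> fin_cases j <;> simp [Matrix.one_apply]
  | succ n ih =>
    ext i j
    fin_cases i <;> fin_cases j <;>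
      simp [pow_succ, ih, Matrix.mul_apply, Fin.sum_univ_two] <;>
      (push_cast; ring)


/-- For the Dirac-GAN, the Jacobian at `(0,0)` of the alternating gradient descent
operator `F₂^{n_d} ∘ F₁^{n_g}` (with generator step `F₁` and discriminator step `F₂`)
equals `[[1, −n_g h f′(0)], [n_d h f′(0), 1 − n_g n_d h² f′(0)²]]`. -/
theorem dirac_gan_altgd_jacobian
    (f : ℝ → ℝ) (hf : ContDiff ℝ 1 f) (hf' : ∀ t : ℝ, deriv f t ≠ 0)
    (h : ℝ) (hh : 0 < h) (ng nd : ℕ) (hng : 1 ≤ ng) (hnd : 1 ≤ nd)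
    (F₁ F₂ : (Fin 2 → ℝ) → (Fin 2 → ℝ))
    (hF₁ : ∀ x : Fin 2 → ℝ, F₁ x = ![x 0 - h * deriv f (x 0 * x 1) * x 1, x 1])
    (hF₂ : ∀ x : Fin 2 → ℝ, F₂ x = ![x 0, x 1 + h * deriv f (x 0 * x 1) * x 0]) :
    HasFDerivAt (F₂^[nd] ∘ F₁^[ng])
      (LinearMap.toContinuousLinearMap
        (Matrix.toLin'
          (!![1, -((ng : ℝ) * h * deriv f 0);
              (nd : ℝ) * h * deriv f 0,
              1 - (ng : ℝ) * (nd : ℝ) * h ^ 2 * deriv f 0 ^ 2] :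
            Matrix (Fin 2) (Fin 2) ℝ)))
      0 := by
  have h10 : F₁ 0 = 0 := by
    funext i; fin_cases i <;> simp [hF₁]
  have h20 : F₂ 0 = 0 := by
    funext i; fin_cases i <;> simp [hF₂]
  have hd1 := iterate_deriv h10 (hasFDerivAt_F1 hf hF₁) ng
  have hd2 := iterate_deriv h20 (hasFDerivAt_F2 hf hF₂) nd
  have hc : HasFDerivAt (F₂^[nd]) (toCLM (!![1, 0; h * deriv f 0, 1] ^ nd)) (F₁^[ng] 0) :=
    hd1.1.symm ▸ hd2.2
  refine (hc.comp 0 hd1.2).congr_fderiv ?_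
  rw [toCLM_comp, pow_upper, pow_lower]
  show toCLM _ = toCLM _
  congr 1
  ext i j
  fin_cases i <;> fin_cases j <;>
    simp [Matrix.mul_apply, Fin.sum_univ_two] <;> ring
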